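/- arXiv:2405.06220 — 4 statements merged into one kernel-verified Lean document; each statement's English description precedes it below -/
import Mathlib

section
/- Let K be a number field with ring of integers O_K, β ∈ O_K with |N(β)| > 1, and let (β) = 𝔭_1^{e_1}⋯𝔭_h^{e_h} be the prime ideal factorization of βO_K. If every α ∈ O_K can be written as α = a_0 + a_1 β + ⋯ + a_m β^m with all a_j ∈ {0, 1, …, |N(β)|−1}, then for each i the norm N(𝔭_i) equals q_i, the rational prime lying below 𝔭_i (i.e., every 𝔭_i has inertia degree 1). -/
open NumberField

set_option synthInstance.maxHeartbeats 1000000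
set_option maxHeartbeats 2000000

theorem cns_implies_degree_one_primes
    (K : Type*) [Field K] [NumberField K] (β : 𝓞 K)
    (hβ : 1 < |Algebra.norm ℤ β|)
    (hCNS : ∀ α : 𝓞 K, ∃ (m : ℕ) (a : ℕ → ℕ),
      (∀ j ≤ m, a j < (Algebra.norm ℤ β).natAbs) ∧
      α = ∑ j ∈ Finset.range (m + 1), (a j : 𝓞 K) * β ^ j)
    (P : Ideal (𝓞 K)) (hP : P.IsPrime) (hPne : P ≠ ⊥) (hPβ : β ∈ P)
    (q : ℕ) (hq : q.Prime) (hqP : (q : 𝓞 K) ∈ P) :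
    Ideal.absNorm P = q := by
  haveI : Fact q.Prime := ⟨hq⟩
  haveI hmax : P.IsMaximal := Ideal.IsPrime.isMaximal hP hPne
  have hq0 : (q : 𝓞 K ⧸ P) = 0 := by
    rw [← map_natCast (Ideal.Quotient.mk P)]
    exact Ideal.Quotient.eq_zero_iff_mem.mpr hqP
  haveI : CharP (𝓞 K ⧸ P) q := (CharP.charP_iff_prime_eq_zero hq).2 hq0
  let f := ZMod.castHom (dvd_refl q) (𝓞 K ⧸ P)
  have hβ0 : (Ideal.Quotient.mk P) β = 0 := Ideal.Quotient.eq_zero_iff_mem.mpr hPβ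
  have hsurj : Function.Surjective f := by
    intro x
    obtain ⟨α, rfl⟩ := Ideal.Quotient.mk_surjective x
    obtain ⟨m, a, hb, heq⟩ := hCNS α
    refine ⟨(a 0 : ZMod q), ?_⟩
    rw [heq, map_sum]
    rw [Finset.sum_eq_single 0]
    · simp [f]
    · intro j hj hj0
      simp [hβ0, zero_pow hj0]
    · simp
  have hbij : Function.Bijective f := ⟨f.injective, hsurj⟩
  have hcard : Nat.card (ZMod q) = Nat.card (𝓞 K ⧸ P) := Nat.card_eq_of_bijective f hbij
  rw [Ideal.absNorm_apply, Submodule.cardQuot_apply, ← hcard, Nat.card_eq_fintype_card, ZMod.card]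
end

section
/- Let p and q be coprime integers with q ≥ 2 and |p| ≥ 2, and b ∈ {0,1,…,q−1}. Let M_b(p,q,N) be the number of n with 1 ≤ n ≤ N such that the digit b does not appear among the digits of the q-adic expansion of p^n (interpreted via the periodic q-adic digit sequence of p^n in ℤ_q when b = 0 is handled as for b ≠ 0 with base-q digits). Then there exists a constant C, depending only on p and q, such that M_b(p,q,N) ≤ C · N^{log(q−1)/log q} for all N ≥ 1. -/
/-!
Write `a = |p|`, a unit modulo `q`. Lifting the exponent at every prime factor of `q` gives `k₀`
with `q ^ (k₀ + k) ∣ a ^ n - 1 → q ^ k ∣ n`, so for `N < q ^ k` the residues of `a ^ n`,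
`1 ≤ n ≤ N`, modulo `q ^ (k₀ + k)` are pairwise distinct. A digit missing from `a ^ n` is
missing from its residue, and for `q ≥ 3` at most `2 (q - 1) ^ K` numbers below `q ^ K` miss a
given digit; with `k = ⌊log_q N⌋ + 1` this is `O(N ^ log_q (q - 1))`. For `q = 2` the exponent
is `0`: every positive number has the binary digit `1`, and `a ^ n = 2 ^ L - 1` gives
`2 ^ L ∣ a ^ (2 n) - 1`, which bounds `n`.
-/

open Finset

theorem exists_padicValNat_pow_sub_one_le {r a : ℕ} [hr : Fact r.Prime] (ha : 1 < a)
    (hra : ¬r ∣ a) : ∃ D, ∀ n ≠ 0, padicValNat r (a ^ n - 1) ≤ D + padicValNat r n := by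
  suffices ∃ m ≠ 0, ∃ D, ∀ n ≠ 0,
      padicValNat r (a ^ (m * n) - 1) ≤ D + padicValNat r n by
    obtain ⟨m, hm, D, hD⟩ := this
    refine ⟨D, fun n hn => le_trans ?_ (hD n hn)⟩
    have hdvd : a ^ n - 1 ∣ a ^ (m * n) - 1 := by
      simpa only [one_pow, pow_mul'] using Nat.sub_dvd_pow_sub_pow (a ^ n) 1 m
    have hne : a ^ (m * n) - 1 ≠ 0 :=
      Nat.sub_ne_zero_of_lt (Nat.one_lt_pow (Nat.mul_ne_zero hm hn) ha)
    exact (padicValNat_dvd_iff_le hne).mp (pow_padicValNat_dvd.trans hdvd)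
  rcases hr.out.eq_two_or_odd' with rfl | hodd
  · refine ⟨2, two_ne_zero, padicValNat 2 (a + 1) + padicValNat 2 (a - 1), fun n hn => ?_⟩
    have h := padicValNat.pow_two_sub_one ha (by omega) (Nat.mul_ne_zero two_ne_zero hn)
      (even_two_mul n)
    rw [padicValNat.mul two_ne_zero hn, padicValNat_self] at h
    omega
  · -- Fermat's little theorem puts `a ^ (r - 1)` in the range of the odd-prime LTE lemma.
    have hfermat : r ∣ a ^ (r - 1) - 1 := by
      have h := Nat.ModEq.pow_totient (Nat.coprime_comm.mp (hr.out.coprime_iff_not_dvd.mpr hra))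
      rw [Nat.totient_prime hr.out] at h
      exact (Nat.modEq_iff_dvd' (Nat.one_le_pow _ _ (by omega))).mp h.symm
    have hr1 : r - 1 ≠ 0 := by have := hr.out.two_le; omega
    refine ⟨r - 1, hr1, padicValNat r (a ^ (r - 1) - 1), fun n hn => ?_⟩
    have h := padicValNat.pow_sub_pow (x := a ^ (r - 1)) (y := 1) hodd (Nat.one_lt_pow hr1 ha)
      hfermat (fun h => hra (hr.out.dvd_of_dvd_pow h)) hn
    rw [one_pow] at h
    rw [pow_mul, h]

theorem exists_pow_dvd_of_pow_dvd_pow_sub_one {a q : ℕ} (ha : 1 < a) (hcop : a.Coprime q) :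
    ∃ k₀, ∀ k n, n ≠ 0 → q ^ (k₀ + k) ∣ a ^ n - 1 → q ^ k ∣ n := by
  have hD : ∀ r ∈ q.primeFactors,
      ∃ D, ∀ n ≠ 0, padicValNat r (a ^ n - 1) ≤ D + padicValNat r n := by
    intro r hr
    have : Fact r.Prime := ⟨Nat.prime_of_mem_primeFactors hr⟩
    refine exists_padicValNat_pow_sub_one_le ha fun hra => ?_
    exact this.out.not_dvd_one (hcop ▸ Nat.dvd_gcd hra (Nat.dvd_of_mem_primeFactors hr))
  choose! D hD using hD
  refine ⟨q.primeFactors.sup D, fun k n hn hdvd => ?_⟩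
  have hq : q ≠ 0 := by rintro rfl; exact ha.ne' (Nat.coprime_zero_right a |>.mp hcop)
  have hne : a ^ n - 1 ≠ 0 := Nat.sub_ne_zero_of_lt (Nat.one_lt_pow hn ha)
  refine (Nat.factorization_prime_le_iff_dvd (pow_ne_zero k hq) hn).mp fun r hr => ?_
  have : Fact r.Prime := ⟨hr⟩
  simp only [Nat.factorization_def _ hr, padicValNat.pow]
  rcases Nat.eq_zero_or_pos (padicValNat r q) with he | he
  · simp [he]
  have hrq : r ∈ q.primeFactors :=
    Nat.mem_primeFactors.mpr ⟨hr, dvd_of_one_le_padicValNat he, hq⟩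
  have hlow : (q.primeFactors.sup D + k) * padicValNat r q ≤ padicValNat r (a ^ n - 1) := by
    rw [← padicValNat_dvd_iff_le hne, mul_comm, pow_mul]
    exact (pow_dvd_pow_of_dvd pow_padicValNat_dvd _).trans hdvd
  have hsup : D r ≤ q.primeFactors.sup D := Finset.le_sup hrq
  nlinarith [hD r hrq n hn]

theorem exists_injOn_pow_mod {a q : ℕ} (ha : 1 < a) (hcop : a.Coprime q) :
    ∃ k₀, ∀ k, Set.InjOn (fun n => a ^ n % q ^ (k₀ + k)) (Set.Iio (q ^ k)) := by
  obtain ⟨k₀, hk₀⟩ := exists_pow_dvd_of_pow_dvd_pow_sub_one ha hcop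
  refine ⟨k₀, fun k => ?_⟩
  suffices h : ∀ n m, n ≤ m → m < q ^ k → a ^ n ≡ a ^ m [MOD q ^ (k₀ + k)] → n = m by
    intro n hn m hm hnm
    rcases le_total n m with hle | hle
    · exact h n m hle hm hnm
    · exact (h m n hle hn hnm.symm).symm
  intro n m hle hm hnm
  obtain ⟨d, rfl⟩ := Nat.exists_eq_add_of_le hle
  have hcancel : 1 ≡ a ^ d [MOD q ^ (k₀ + k)] :=
    Nat.ModEq.cancel_left_of_coprime (hcop.pow n (k₀ + k)).symm (by rwa [mul_one, ← pow_add])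
  have hdvd := (Nat.modEq_iff_dvd' (Nat.one_le_pow _ _ (by omega))).mp hcancel
  by_contra hne
  have := Nat.le_of_dvd (by omega) (hk₀ k d (by omega) hdvd)
  omega

theorem digits_mod_pow_subset {q : ℕ} (hq : 1 < q) (k x : ℕ) :
    Nat.digits q (x % q ^ k) ⊆ Nat.digits q x := by
  induction k generalizing x with
  | zero => simp [Nat.mod_one]
  | succ k ih =>
    rw [pow_succ', Nat.mod_mul]
    rcases Nat.eq_zero_or_pos (x % q + q * (x / q % q ^ k)) with h | h
    · simp [h]
    have hx : 0 < x := by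
      rcases Nat.eq_zero_or_pos x with rfl | hx
      · simp at h
      · exact hx
    rw [Nat.digits_add q hq _ _ (Nat.mod_lt _ (by omega))
      (by by_contra! h'; simp [h'] at h), Nat.digits_def' hq hx]
    exact List.cons_subset_cons _ (ih _)

theorem card_filter_notMem_digits_pow_succ_le {q b : ℕ} (hq : 1 < q) (hb : b < q) (k : ℕ) :
    #{x ∈ range (q ^ (k + 1)) | b ∉ Nat.digits q x} ≤
      (q - 1) * #{x ∈ range (q ^ k) | b ∉ Nat.digits q x} + 1 := by
  set S := {x ∈ range (q ^ k) | b ∉ Nat.digits q x}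
  have hsub : {x ∈ range (q ^ (k + 1)) | b ∉ Nat.digits q x} ⊆
      insert 0 ((((range q).erase b) ×ˢ S).image fun dy => dy.1 + q * dy.2) := by
    intro x hx
    simp only [mem_filter, mem_range] at hx
    rcases Nat.eq_zero_or_pos x with rfl | hx0
    · exact mem_insert_self _ _
    rw [Nat.digits_def' hq hx0, List.mem_cons, not_or] at hx
    refine mem_insert_of_mem (mem_image.mpr ⟨(x % q, x / q), ?_, Nat.mod_add_div x q⟩)
    simp only [mem_product, mem_erase, mem_range, S, mem_filter]
    refine ⟨⟨Ne.symm hx.2.1, Nat.mod_lt _ (by omega)⟩, ?_, hx.2.2⟩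
    rw [Nat.div_lt_iff_lt_mul (by omega), ← pow_succ]
    exact hx.1
  calc _ ≤ _ := card_le_card hsub
    _ ≤ _ := card_insert_le _ _
    _ ≤ #(((range q).erase b) ×ˢ S) + 1 := by gcongr; exact card_image_le
    _ = _ := by rw [card_product, card_erase_of_mem (mem_range.mpr hb), card_range]

theorem card_filter_notMem_digits_pow_le {q b : ℕ} (hq : 1 < q) (hb : b < q) (k : ℕ) :
    (q - 2) * #{x ∈ range (q ^ k) | b ∉ Nat.digits q x} + 1 ≤ (q - 1) ^ (k + 1) := by
  obtain ⟨c, rfl⟩ : ∃ c, q = c + 2 := ⟨q - 2, by omega⟩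
  simp only [Nat.add_sub_cancel, show c + 2 - 1 = c + 1 by omega]
  induction k with
  | zero =>
    have : #{x ∈ range ((c + 2) ^ 0) | b ∉ Nat.digits (c + 2) x} ≤ 1 :=
      (card_filter_le _ _).trans (by simp)
    simpa using Nat.add_le_add_right (Nat.mul_le_mul_left c this) 1
  | succ k ih =>
    have hrec := card_filter_notMem_digits_pow_succ_le hq hb k
    simp only [show c + 2 - 1 = c + 1 by omega] at hrec
    set S := #{x ∈ range ((c + 2) ^ k) | b ∉ Nat.digits (c + 2) x}
    calc _ ≤ c * ((c + 1) * S + 1) + 1 := by gcongr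
      _ = (c + 1) * (c * S + 1) := by ring
      _ ≤ (c + 1) * (c + 1) ^ (k + 1) := by gcongr
      _ = _ := by ring

theorem card_filter_notMem_digits_pow_le_two_mul {q b : ℕ} (hq : 3 ≤ q) (hb : b < q) (k : ℕ) :
    #{x ∈ range (q ^ k) | b ∉ Nat.digits q x} ≤ 2 * (q - 1) ^ k := by
  have h := card_filter_notMem_digits_pow_le (by omega) hb k
  have hq' : (q - 1) ^ (k + 1) ≤ (q - 2) * (2 * (q - 1) ^ k) := by
    rw [pow_succ', ← mul_assoc]
    gcongr
    omega
  exact Nat.le_of_mul_le_mul_left (by omega) (by omega : 0 < q - 2)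

theorem exists_card_filter_notMem_digits_pow_le {a q : ℕ} (ha : 1 < a) (hq : 1 < q)
    (hcop : a.Coprime q) (b : ℕ) : ∃ k₀, ∀ N k, N < q ^ k →
      #{n ∈ Icc 1 N | b ∉ Nat.digits q (a ^ n)} ≤
        #{x ∈ range (q ^ (k₀ + k)) | b ∉ Nat.digits q x} := by
  obtain ⟨k₀, hinj⟩ := exists_injOn_pow_mod ha hcop
  refine ⟨k₀, fun N k hN =>
    card_le_card_of_injOn (fun n => a ^ n % q ^ (k₀ + k)) (fun n hn => ?_) fun n hn m hm => ?_⟩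
  · simp only [coe_filter, mem_range, Set.mem_ofPred_eq] at hn ⊢
    exact ⟨Nat.mod_lt _ (by positivity), fun h => hn.2 (digits_mod_pow_subset hq _ _ h)⟩
  · simp only [coe_filter, mem_Icc, Set.mem_ofPred_eq] at hn hm
    exact hinj k (Set.mem_Iio.mpr (by omega)) (Set.mem_Iio.mpr (by omega))

theorem pow_log_le_rpow_logb {b N : ℕ} {c : ℝ} (hb : 1 < b) (hc : 1 ≤ c) (hN : N ≠ 0) :
    c ^ Nat.log b N ≤ (N : ℝ) ^ Real.logb b c := by
  have hb' : (1 : ℝ) < b := by exact_mod_cast hb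
  calc c ^ Nat.log b N = ((b : ℝ) ^ Nat.log b N) ^ Real.logb b c := by
        rw [← Real.rpow_natCast, ← Real.rpow_natCast, ← Real.rpow_mul (by positivity),
          mul_comm, Real.rpow_mul (by positivity),
          Real.rpow_logb (by positivity) hb'.ne' (by positivity)]
    _ ≤ (N : ℝ) ^ Real.logb b c := by
        gcongr
        · exact Real.logb_nonneg hb' hc
        · exact_mod_cast Nat.pow_log_le_self b hN

theorem one_mem_digits_two {m : ℕ} (hm : m ≠ 0) : 1 ∈ Nat.digits 2 m := by
  have hlast := Nat.getLast_digit_ne_zero 2 hm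
  have hlt :=
    Nat.digits_lt_base one_lt_two (List.getLast_mem (Nat.digits_ne_nil_iff_ne_zero.mpr hm))
  rw [← show (Nat.digits 2 m).getLast _ = 1 by omega]
  exact List.getLast_mem _

theorem add_one_eq_two_pow_of_zero_notMem_digits (m : ℕ) (hm : 0 ∉ Nat.digits 2 m) :
    m + 1 = 2 ^ (Nat.digits 2 m).length := by
  induction m using Nat.strong_induction_on with
  | _ m ih =>
    rcases Nat.eq_zero_or_pos m with rfl | hm0
    · simp
    rw [Nat.digits_def' one_lt_two hm0, List.mem_cons, not_or] at hm
    rw [Nat.digits_def' one_lt_two hm0, List.length_cons, pow_succ,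
      ← ih (m / 2) (by omega) hm.2]
    omega

theorem exists_le_of_zero_notMem_digits_two_pow {a : ℕ} (ha : 1 < a) (hcop : a.Coprime 2) :
    ∃ B, ∀ n, 0 ∉ Nat.digits 2 (a ^ n) → n ≤ B := by
  obtain ⟨k₀, hk₀⟩ := exists_pow_dvd_of_pow_dvd_pow_sub_one ha hcop
  refine ⟨2 * k₀, fun n hn => ?_⟩
  set L := (Nat.digits 2 (a ^ n)).length
  have hL : a ^ n + 1 = 2 ^ L := add_one_eq_two_pow_of_zero_notMem_digits _ hn
  have hnL : n < L := by
    have : 2 ^ n ≤ a ^ n := Nat.pow_le_pow_left ha n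
    exact (Nat.pow_lt_pow_iff_right one_lt_two).mp (by omega)
  by_contra! hbig
  -- `2 ^ L = a ^ n + 1` divides `a ^ (2 n) - 1`, so `2 ^ (L - k₀) ∣ 2 n` although `L > n`.
  have hdvd : 2 ^ (k₀ + (L - k₀)) ∣ a ^ (2 * n) - 1 := by
    rw [Nat.add_sub_cancel' (by omega), ← hL, pow_mul', ← one_pow 2, Nat.sq_sub_sq, one_pow]
    exact dvd_mul_right _ _
  have h2n := Nat.le_of_dvd (by omega) (hk₀ _ _ (by omega) hdvd)
  have hpow : 2 ^ (n - k₀ + 1) ≤ 2 * n := (Nat.pow_le_pow_right two_pos (by omega)).trans h2n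
  rw [show n - k₀ + 1 = n - k₀ - 1 + 2 by omega, pow_add] at hpow
  have := Nat.lt_two_pow_self (n := n - k₀ - 1)
  omega

theorem exists_card_filter_notMem_digits_pow_le_rpow {a q b : ℕ} (ha : 1 < a) (hq : 3 ≤ q)
    (hcop : a.Coprime q) (hb : b < q) : ∃ C : ℝ, 0 < C ∧ ∀ N : ℕ, N ≠ 0 →
      (#{n ∈ Icc 1 N | b ∉ Nat.digits q (a ^ n)} : ℝ) ≤
        C * (N : ℝ) ^ Real.logb q (q - 1) := by
  obtain ⟨k₀, hk₀⟩ := exists_card_filter_notMem_digits_pow_le ha (by omega) hcop b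
  have hq1 : (1 : ℝ) ≤ q - 1 := by
    have : (3 : ℝ) ≤ q := by exact_mod_cast hq
    linarith
  refine ⟨2 * ((q : ℝ) - 1) ^ (k₀ + 1), by positivity, fun N hN => ?_⟩
  have hcount := (hk₀ N _ (Nat.lt_pow_succ_log_self (by omega) N)).trans
    (card_filter_notMem_digits_pow_le_two_mul hq hb _)
  calc (#{n ∈ Icc 1 N | b ∉ Nat.digits q (a ^ n)} : ℝ)
      ≤ ((2 * (q - 1) ^ (k₀ + (Nat.log q N + 1)) : ℕ) : ℝ) := by exact_mod_cast hcount
    _ = 2 * ((q : ℝ) - 1) ^ (k₀ + (Nat.log q N + 1)) := by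
        push_cast [Nat.cast_sub (by omega : 1 ≤ q)]; rfl
    _ = 2 * ((q : ℝ) - 1) ^ (k₀ + 1) * ((q : ℝ) - 1) ^ Nat.log q N := by ring
    _ ≤ _ := by gcongr; exact pow_log_le_rpow_logb (by omega) hq1 hN

theorem exists_card_filter_notMem_digits_two_pow_le {a b : ℕ} (ha : 1 < a)
    (hcop : a.Coprime 2) (hb : b < 2) :
    ∃ B, ∀ N, #{n ∈ Icc 1 N | b ∉ Nat.digits 2 (a ^ n)} ≤ B := by
  interval_cases b
  · obtain ⟨B, hB⟩ := exists_le_of_zero_notMem_digits_two_pow ha hcop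
    refine ⟨B, fun N => (card_le_card fun n hn => ?_).trans_eq (Nat.card_Icc 1 B)⟩
    simp only [mem_filter, mem_Icc] at hn ⊢
    exact ⟨hn.1.1, hB n hn.2⟩
  · refine ⟨0, fun N => (card_eq_zero.mpr (filter_false_of_mem fun n _ => ?_)).le⟩
    exact not_not.mpr (one_mem_digits_two (pow_ne_zero n (by omega)))

theorem digit_omission_bound_int
    (p : ℤ) (q : ℕ) (hp : 2 ≤ |p|) (hq : 2 ≤ q)
    (hcop : IsCoprime p (q : ℤ)) (b : ℕ) (hb : b < q) :
    ∃ C : ℝ, 0 < C ∧ ∀ N : ℕ, 1 ≤ N →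
      (((Finset.Icc 1 N).filter
          (fun n => b ∉ Nat.digits q ((p ^ n).natAbs))).card : ℝ) ≤
        C * (N : ℝ) ^ (Real.log (q - 1) / Real.log q) := by
  have ha : 1 < p.natAbs := by rw [Int.abs_eq_natAbs] at hp; omega
  have hcop' : p.natAbs.Coprime q := Int.isCoprime_iff_gcd_eq_one.mp hcop
  simp_rw [Int.natAbs_pow, Real.log_div_log]
  rcases (show q = 2 ∨ 3 ≤ q by omega) with rfl | hq3
  · obtain ⟨B, hB⟩ := exists_card_filter_notMem_digits_two_pow_le ha hcop' hb
    refine ⟨B + 1, by positivity, fun N _ => ?_⟩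
    rw [show ((2 : ℕ) : ℝ) - 1 = 1 by norm_num, Real.logb_one, Real.rpow_zero, mul_one]
    exact_mod_cast (hB N).trans B.le_succ
  · obtain ⟨C, hC, hbound⟩ := exists_card_filter_notMem_digits_pow_le_rpow ha hq3 hcop' hb
    exact ⟨C, hC, fun N hN => hbound N (by omega)⟩
end

section
/- There exists a constant C such that for all N ≥ 1, the number of integers n with 1 ≤ n ≤ N for which the ternary (base-3) expansion of 2^n omits the digit 2 is at most C · N^{log 2 / log 3}. -/
/-!
Take `k = ⌊log₃ N⌋`, so `3 ^ k ≤ N < 3 ^ (k + 1)`. If `2 ^ n` has no ternary digit `2`, then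
neither has its residue modulo `3 ^ (k + 1)`, and there are only `2 ^ (k + 1)` such residues.
Since `2` has order `2 * 3 ^ k` modulo `3 ^ (k + 1)`, the residue determines `n` modulo
`2 * 3 ^ k`, and an interval of length `N < 3 ^ (k + 1)` meets each class at most twice.
Hence the count is at most `4 * 2 ^ k ≤ 4 * N ^ (log 2 / log 3)`.
-/

open Finset

lemma Nat.div_pow_mod_mem_digits {b m i : ℕ} (hb : 2 ≤ b) (h : m / b ^ i % b ≠ 0) :
    m / b ^ i % b ∈ Nat.digits b m := by
  rw [← Nat.getD_digits m i hb] at h ⊢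
  have hi : i < (Nat.digits b m).length := by
    by_contra! hle
    exact h (List.getD_eq_default _ _ hle)
  rw [List.getD_eq_getElem _ _ hi]
  exact List.getElem_mem hi

lemma Nat.mod_pow_div_pow_mod {b i j : ℕ} (m : ℕ) (hij : i < j) :
    m % b ^ j / b ^ i % b = m / b ^ i % b := by
  rw [← Nat.add_sub_of_le hij.le, pow_add, Nat.mod_mul_right_div_self,
    Nat.mod_mod_of_dvd _ (dvd_pow_self b (by omega))]

lemma finFunctionFinEquiv_symm_ofNat_val {b j : ℕ} [NeZero (b ^ j)] (m : ℕ) (i : Fin j) :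
    (finFunctionFinEquiv.symm (Fin.ofNat (b ^ j) m) i : ℕ) = m / b ^ (i : ℕ) % b := by
  rw [finFunctionFinEquiv_symm_apply_val, Fin.val_ofNat, Nat.mod_pow_div_pow_mod _ i.2]

lemma card_filter_finFunctionFinEquiv_symm_ne {b j : ℕ} (d : Fin b) :
    #{r : Fin (b ^ j) | ∀ i, finFunctionFinEquiv.symm r i ≠ d} = (b - 1) ^ j := by
  have : ({r : Fin (b ^ j) | ∀ i, finFunctionFinEquiv.symm r i ≠ d} : Finset _) =
      (Fintype.piFinset fun _ => univ.erase d).map finFunctionFinEquiv.toEmbedding := by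
    ext r
    simp [mem_map_equiv]
  rw [this, card_map, Fintype.card_piFinset, card_erase_of_mem (mem_univ d)]
  simp

lemma ZMod.orderOf_two_three_pow (k : ℕ) : orderOf (2 : ZMod (3 ^ (k + 1))) = 2 * 3 ^ k := by
  -- `2 ^ 2 = 1 + 3` has order `3 ^ k`, and the order of `2` is even because `2 = -1` modulo `3`.
  have hfour : orderOf ((2 : ZMod (3 ^ (k + 1))) ^ 2) = 3 ^ k := by
    rw [show (2 : ZMod (3 ^ (k + 1))) ^ 2 = 1 + (3 : ℕ) by push_cast; norm_num]
    exact ZMod.orderOf_one_add_prime Nat.prime_three (by norm_num) k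
  have heven : 2 ∣ orderOf (2 : ZMod (3 ^ (k + 1))) := by
    have := Fact.mk Nat.prime_two
    have h := orderOf_map_dvd
      (ZMod.castHom (dvd_pow_self 3 k.succ_ne_zero) (ZMod 3) : ZMod (3 ^ (k + 1)) →* ZMod 3) 2
    rwa [MonoidHom.coe_coe, map_ofNat,
      orderOf_eq_prime (p := 2) (x := (2 : ZMod 3)) (by decide) (by decide)] at h
  obtain ⟨c, hc⟩ := heven
  rw [orderOf_pow' _ two_ne_zero, hc, Nat.gcd_mul_right_left,
    Nat.mul_div_cancel_left _ two_pos] at hfour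
  rw [hc, hfour]

lemma Nat.modEq_of_two_pow_modEq_three_pow {k a b : ℕ} (h : 2 ^ a ≡ 2 ^ b [MOD 3 ^ (k + 1)]) :
    a ≡ b [MOD 2 * 3 ^ k] := by
  have hfin : IsOfFinOrder (2 : ZMod (3 ^ (k + 1))) := by
    rw [← orderOf_pos_iff, ZMod.orderOf_two_three_pow]
    positivity
  rw [← ZMod.orderOf_two_three_pow, ← hfin.pow_eq_pow_iff_modEq]
  exact_mod_cast (ZMod.natCast_eq_natCast_iff _ _ _).mpr h

lemma two_pow_eq_three_pow_rpow (k : ℕ) :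
    (2 : ℝ) ^ k = ((3 : ℝ) ^ k) ^ (Real.log 2 / Real.log 3) := by
  rw [← Real.rpow_natCast, ← Real.rpow_natCast 3, ← Real.rpow_mul (by norm_num), mul_comm,
    Real.rpow_mul (by norm_num), ← Real.logb,
    Real.rpow_logb (by norm_num) (by norm_num) (by norm_num)]

lemma card_filter_two_pow_two_notMem_digits_le {k N : ℕ} (hN : N < 3 ^ (k + 1)) :
    #{n ∈ Icc 1 N | 2 ∉ Nat.digits 3 (2 ^ n)} ≤ 2 ^ (k + 1) * 2 := by
  set T : Finset (Fin (3 ^ (k + 1))) := {r | ∀ i, finFunctionFinEquiv.symm r i ≠ 2}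
  let f (n : ℕ) : Fin (3 ^ (k + 1)) × ℕ := (Fin.ofNat _ (2 ^ n), n / (2 * 3 ^ k))
  calc _ ≤ #(T ×ˢ range 2) := card_le_card_of_injOn f ?_ ?_
    _ = 2 ^ (k + 1) * 2 := by
      rw [card_product, card_filter_finFunctionFinEquiv_symm_ne, card_range]
  · intro n hn
    rw [mem_coe, mem_filter, mem_Icc] at hn
    have hquot : n / (2 * 3 ^ k) < 2 := Nat.div_lt_of_lt_mul (by rw [pow_succ] at hN; lia)
    rw [mem_coe, mem_product, mem_filter, mem_range]
    refine ⟨⟨mem_univ _, fun i hi => hn.2 ?_⟩, hquot⟩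
    have hdigit : 2 ^ n / 3 ^ (i : ℕ) % 3 = 2 := by
      rw [← finFunctionFinEquiv_symm_ofNat_val, hi]
      rfl
    have hmem := Nat.div_pow_mod_mem_digits (b := 3) (m := 2 ^ n) (i := i) (by norm_num)
      (by rw [hdigit]; norm_num)
    rwa [hdigit] at hmem
  · intro a _ b _ hab
    simp only [f, Prod.mk.injEq, Fin.ext_iff, Fin.val_ofNat] at hab
    have hmod : a % (2 * 3 ^ k) = b % (2 * 3 ^ k) := Nat.modEq_of_two_pow_modEq_three_pow hab.1
    rw [← Nat.div_add_mod a (2 * 3 ^ k), ← Nat.div_add_mod b (2 * 3 ^ k), hab.2, hmod]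

theorem narkiewicz_bound :
    ∃ C : ℝ, ∀ N : ℕ, 1 ≤ N →
      (((Finset.Icc 1 N).filter
          (fun n => 2 ∉ Nat.digits 3 (2 ^ n))).card : ℝ) ≤
        C * (N : ℝ) ^ (Real.log 2 / Real.log 3) := by
  refine ⟨4, fun N hN => ?_⟩
  set k := Nat.log 3 N
  have hcard :=
    card_filter_two_pow_two_notMem_digits_le (Nat.lt_pow_succ_log_self (by norm_num) N)
  have hk : (3 : ℝ) ^ k ≤ N := by exact_mod_cast Nat.pow_log_le_self 3 (by omega)
  have hexp : 0 ≤ Real.log 2 / Real.log 3 := by positivity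
  calc _ ≤ (4 : ℝ) * 2 ^ k := by exact_mod_cast hcard.trans_eq (by ring)
    _ = 4 * ((3 : ℝ) ^ k) ^ (Real.log 2 / Real.log 3) := by rw [two_pow_eq_three_pow_rpow]
    _ ≤ 4 * (N : ℝ) ^ (Real.log 2 / Real.log 3) := by gcongr
end

section
/- Let q be a prime and a an integer with a ≡ 1 (mod q^2), a ≠ 1. Fix k ≥ 1, a digit b ∈ {0,…,q−1}, and a word (a_0,…,a_{k−1}) ∈ ({0,…,q−1} \ {b})^k. Let S = {0 ≤ n ≤ q^k − 1 : a^n mod q^k has base-q digits a_0,…,a_{k−1}}. Then #S ≤ q^{c}, where c = v_q(log_q(a)) depends only on a and q; in particular #S is bounded independently of k. -/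
/-! Write `c = v_q(a - 1) ≥ 2`. By lifting the exponent, `v_q(a ^ d - 1) = c + v_q(d)` for `d ≠ 0`,
so `a ^ m ≡ a ^ n (mod q ^ k)` forces `m ≡ n (mod q ^ (k - c))`. The residue of `a ^ n` modulo
`q ^ k` is determined by its `k` digits, so the `n < q ^ k` with a prescribed digit word lie in a
single class modulo `q ^ (k - c)`, and there are at most `q ^ c` of them. The same `c` is the
valuation of `log a = ∑ (-1) ^ i (a - 1) ^ (i + 1) / (i + 1)`: since `c ≥ 2`, the first term of the
series strictly dominates all the others. -/

open Filter Topology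

theorem Nat.mod_pow_eq_of_digits_eq {q x y k : ℕ}
    (h : ∀ j < k, x / q ^ j % q = y / q ^ j % q) : x % q ^ k = y % q ^ k := by
  induction k with
  | zero => simp [Nat.mod_one]
  | succ k ih =>
    rw [Nat.mod_pow_succ, Nat.mod_pow_succ, ih fun j hj => h j (by omega), h k (by omega)]

theorem Int.modEq_of_digits_eq {q k : ℕ} (hq : q ≠ 0) {x y : ℤ}
    (h : ∀ j < k, (x % (q : ℤ) ^ k).toNat / q ^ j % q = (y % (q : ℤ) ^ k).toNat / q ^ j % q) :
    x ≡ y [ZMOD (q : ℤ) ^ k] := by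
  have hQ : (0 : ℤ) < (q : ℤ) ^ k := by positivity
  have residue_cast (z : ℤ) : ((z % (q : ℤ) ^ k).toNat : ℤ) = z % (q : ℤ) ^ k :=
    Int.toNat_of_nonneg (Int.emod_nonneg z hQ.ne')
  have residue_lt (z : ℤ) : (z % (q : ℤ) ^ k).toNat < q ^ k := by
    rw [← Nat.cast_lt (α := ℤ), residue_cast, Nat.cast_pow]
    exact Int.emod_lt_of_pos z hQ
  have := Nat.mod_pow_eq_of_digits_eq h
  rw [Nat.mod_eq_of_lt (residue_lt x), Nat.mod_eq_of_lt (residue_lt y)] at this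
  rw [Int.ModEq, ← residue_cast x, ← residue_cast y, this]

theorem Finset.card_le_of_forall_modEq {s : Finset ℕ} {d N : ℕ} (hs : ∀ n ∈ s, n < d * N)
    (hmod : ∀ n ∈ s, ∀ m ∈ s, n ≡ m [MOD d]) : s.card ≤ N := by
  simpa using Finset.card_le_card_of_injOn (t := Finset.range N) (· / d)
    (fun n hn => Finset.mem_range.mpr (Nat.div_lt_of_lt_mul (hs n hn)))
    fun n hn m hm (hnm : n / d = m / d) => by
      rw [← Nat.div_add_mod n d, ← Nat.div_add_mod m d, hmod n hn m hm, hnm]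

theorem not_dvd_of_dvd_sub_one {R : Type*} [CommRing R] {p a : R} (hp : ¬IsUnit p)
    (h : p ∣ a - 1) : ¬p ∣ a :=
  fun ha => hp (isUnit_of_dvd_one (by simpa using dvd_sub ha h))

section LiftingTheExponent

variable {p : ℕ} [hp : Fact p.Prime]

theorem Int.emultiplicity_pow_sub_one {a : ℤ} (ha : (p : ℤ) ^ 2 ∣ a - 1) (n : ℕ) :
    emultiplicity (p : ℤ) (a ^ n - 1) = emultiplicity (p : ℤ) (a - 1) + emultiplicity p n := by
  have hpa1 : (p : ℤ) ∣ a - 1 := (dvd_pow_self _ two_ne_zero).trans ha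
  have hpa := not_dvd_of_dvd_sub_one (Nat.prime_iff_prime_int.mp hp.out).not_isUnit hpa1
  rcases hp.out.eq_two_or_odd' with rfl | hodd
  · rw [← Int.natCast_emultiplicity]
    simpa using Int.two_pow_sub_pow' (y := 1) n (by simpa using ha) hpa
  · simpa using Int.emultiplicity_pow_sub_pow hp.out hodd (y := 1) (by simpa using hpa1) hpa n

theorem padicValInt_eq_emultiplicity {z : ℤ} (hz : z ≠ 0) :
    (padicValInt p z : ℕ∞) = emultiplicity (p : ℤ) z := by
  rw [padicValInt, padicValNat_eq_emultiplicity (Int.natAbs_ne_zero.mpr hz),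
    Int.emultiplicity_natAbs]

theorem Int.modEq_of_pow_modEq {a : ℤ} (ha : (p : ℤ) ^ 2 ∣ a - 1) (ha1 : a ≠ 1) {k m n : ℕ}
    (h : a ^ m ≡ a ^ n [ZMOD (p : ℤ) ^ k]) : m ≡ n [MOD p ^ (k - padicValInt p (a - 1))] := by
  wlog hmn : m ≤ n generalizing m n
  · exact (this h.symm (le_of_not_ge hmn)).symm
  obtain ⟨d, rfl⟩ := Nat.exists_eq_add_of_le hmn
  have hprime := Nat.prime_iff_prime_int.mp hp.out
  have hcop : IsCoprime ((p : ℤ) ^ k) (a ^ m) := by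
    refine (hprime.coprime_iff_not_dvd.mpr (not_dvd_of_dvd_sub_one hprime.not_isUnit ?_)).pow
    exact (dvd_pow_self _ two_ne_zero).trans ha
  have hkd : (p : ℤ) ^ k ∣ a ^ d - 1 := hcop.dvd_of_dvd_mul_left (by
    simpa [pow_add, mul_sub] using h.dvd)
  have hle : (k : ℕ∞) ≤ padicValInt p (a - 1) + emultiplicity p d := by
    rw [padicValInt_eq_emultiplicity (sub_ne_zero.mpr ha1), ← Int.emultiplicity_pow_sub_one ha]
    exact le_emultiplicity_of_pow_dvd hkd
  have hd : p ^ (k - padicValInt p (a - 1)) ∣ d :=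
    pow_dvd_of_le_emultiplicity (by rw [ENat.natCast_sub]; exact tsub_le_iff_left.mpr hle)
  simpa using (Nat.modEq_zero_iff_dvd.mpr hd).symm.add_left m

end LiftingTheExponent

namespace Padic

variable {p : ℕ} [hp : Fact p.Prime]

noncomputable def logSeriesTerm (x : ℚ_[p]) (i : ℕ) : ℚ_[p] :=
  (-1) ^ i * x ^ (i + 1) / ((i : ℚ_[p]) + 1)

theorem inv_pow_le_norm_natCast_succ (i : ℕ) : (p : ℝ)⁻¹ ^ i ≤ ‖(i : ℚ_[p]) + 1‖ := by
  have hv : padicValNat p (i + 1) ≤ i :=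
    Nat.lt_succ_iff.mp ((padicValNat_le_nat_log _).trans_lt (Nat.log_lt_self p i.succ_ne_zero))
  have hp1 : (1 : ℝ) ≤ p := by exact_mod_cast hp.out.one_lt.le
  rw [← Nat.cast_succ, norm_eq_zpow_neg_valuation (by exact_mod_cast i.succ_ne_zero),
    valuation_natCast, zpow_neg, zpow_natCast, ← inv_pow]
  exact pow_le_pow_of_le_one (by positivity) (inv_le_one_of_one_le₀ hp1) hv

theorem norm_logSeriesTerm_le {x : ℚ_[p]} (hx : ‖x‖ ≤ (p : ℝ)⁻¹ ^ 2) (i : ℕ) :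
    ‖logSeriesTerm x i‖ ≤ ‖x‖ * (p : ℝ)⁻¹ ^ i := by
  have hp0 : (0 : ℝ) < p := by exact_mod_cast hp.out.pos
  calc ‖logSeriesTerm x i‖ = ‖x‖ * ‖x‖ ^ i / ‖(i : ℚ_[p]) + 1‖ := by
        simp [logSeriesTerm, pow_succ']
    _ ≤ ‖x‖ * ((p : ℝ)⁻¹ ^ 2) ^ i / (p : ℝ)⁻¹ ^ i := by
        gcongr
        exact inv_pow_le_norm_natCast_succ i
    _ = ‖x‖ * (p : ℝ)⁻¹ ^ i := by
        field_simp
        ring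

theorem summable_logSeriesTerm {x : ℚ_[p]} (hx : ‖x‖ ≤ (p : ℝ)⁻¹ ^ 2) :
    Summable (logSeriesTerm x) := by
  have hp1 : (1 : ℝ) < p := by exact_mod_cast hp.out.one_lt
  refine NonarchimedeanAddGroup.summable_of_tendsto_cofinite_zero ?_
  rw [Nat.cofinite_eq_atTop, tendsto_zero_iff_norm_tendsto_zero]
  refine squeeze_zero (fun _ => norm_nonneg _) (norm_logSeriesTerm_le hx) ?_
  simpa using (tendsto_pow_atTop_nhds_zero_of_lt_one (by positivity)
    (inv_lt_one_of_one_lt₀ hp1)).const_mul ‖x‖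

theorem norm_tsum_logSeriesTerm {x : ℚ_[p]} (hx : ‖x‖ ≤ (p : ℝ)⁻¹ ^ 2) :
    ‖∑' i, logSeriesTerm x i‖ = ‖x‖ := by
  rcases eq_or_ne x 0 with rfl | hx0
  · simp [logSeriesTerm]
  have hp1 : (1 : ℝ) < p := by exact_mod_cast hp.out.one_lt
  have htail : ‖∑' i, logSeriesTerm x (i + 1)‖ < ‖x‖ :=
    calc ‖∑' i, logSeriesTerm x (i + 1)‖ ≤ ‖x‖ * (p : ℝ)⁻¹ :=
          IsUltrametricDist.norm_tsum_le_of_forall_le_of_nonneg (by positivity) fun i =>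
            (norm_logSeriesTerm_le hx (i + 1)).trans <| by
              gcongr
              exact pow_le_of_le_one (by positivity) (inv_le_one_of_one_le₀ hp1.le) i.succ_ne_zero
      _ < ‖x‖ := mul_lt_of_lt_one_right (norm_pos_iff.mpr hx0) (inv_lt_one_of_one_lt₀ hp1)
  have hhead : logSeriesTerm x 0 = x := by simp [logSeriesTerm]
  rw [(summable_logSeriesTerm hx).tsum_eq_zero_add, hhead,
    IsUltrametricDist.norm_add_eq_max_of_norm_ne_norm htail.ne', max_eq_left htail.le]

end Padic

theorem digit_word_fiber_bounded_general
    (q : ℕ) [Fact q.Prime]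
    (a : ℤ) (ha1 : (q : ℤ) ^ 2 ∣ a - 1) (ha2 : a ≠ 1)
    (k : ℕ) (w : Fin k → ℕ) :
    ∃ (L : ℚ_[q]) (c : ℕ),
      HasSum (fun i : ℕ => (-1) ^ i * ((a : ℚ_[q]) - 1) ^ (i + 1) / ((i : ℚ_[q]) + 1)) L ∧
      ‖L‖ = (q : ℝ) ^ (-(c : ℤ)) ∧
      ((Finset.range (q ^ k)).filter
          (fun n => ∀ j : Fin k,
            (a ^ n % (q : ℤ) ^ k).toNat / q ^ (j : ℕ) % q = w j)).card ≤ q ^ c := by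
  have hq : q.Prime := Fact.out
  set c := padicValInt q (a - 1)
  have hcast : ((a - 1 : ℤ) : ℚ_[q]) = (a : ℚ_[q]) - 1 := by push_cast; rfl
  have hx : ‖(a : ℚ_[q]) - 1‖ ≤ (q : ℝ)⁻¹ ^ 2 := by
    rw [← hcast, inv_pow, ← zpow_natCast, ← zpow_neg]
    exact (Padic.norm_int_le_pow_iff_dvd _ 2).mpr ha1
  refine ⟨_, c, (Padic.summable_logSeriesTerm hx).hasSum, ?_, ?_⟩
  · rw [Padic.norm_tsum_logSeriesTerm hx, ← hcast,
      Padic.norm_eq_zpow_neg_valuation (by exact_mod_cast sub_ne_zero.mpr ha2),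
      Padic.valuation_intCast]
  refine Finset.card_le_of_forall_modEq (d := q ^ (k - c)) (fun n hn => ?_) fun n hn m hm => ?_
  · calc n < q ^ k := Finset.mem_range.mp (Finset.mem_filter.mp hn).1
      _ ≤ q ^ (k - c) * q ^ c := by
        rw [← pow_add]
        exact Nat.pow_le_pow_right hq.pos (by omega)
  · rw [Finset.mem_filter] at hn hm
    exact Int.modEq_of_pow_modEq ha1 ha2 <| Int.modEq_of_digits_eq hq.ne_zero
      fun j hj => (hn.2 ⟨j, hj⟩).trans (hm.2 ⟨j, hj⟩).symm

theorem digit_word_fiber_bounded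
    (q : ℕ) (hq : q.Prime) [Fact q.Prime]
    (a : ℤ) (ha1 : (q : ℤ) ^ 2 ∣ a - 1) (ha2 : a ≠ 1)
    (k : ℕ) (hk : 1 ≤ k) (b : ℕ) (hb : b < q)
    (w : Fin k → ℕ) (hw : ∀ j, w j < q ∧ w j ≠ b) :
    ∃ (L : ℚ_[q]) (c : ℕ),
      HasSum (fun i : ℕ => (-1) ^ i * ((a : ℚ_[q]) - 1) ^ (i + 1) / ((i : ℚ_[q]) + 1)) L ∧
      ‖L‖ = (q : ℝ) ^ (-(c : ℤ)) ∧
      ((Finset.range (q ^ k)).filter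
          (fun n => ∀ j : Fin k,
            (a ^ n % (q : ℤ) ^ k).toNat / q ^ (j : ℕ) % q = w j)).card ≤ q ^ c :=
  digit_word_fiber_bounded_general q a ha1 ha2 k w
end
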